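/- Let 0 < ε ≤ r, A ∈ ℝ^{n×n}, B ∈ ℝ^{n×m}, k ∈ ℝ^{m×n}, let d : [0,∞) → [−1,1] be measurable, and let x : [0,∞) → ℝⁿ, u : [−r−ε,∞) → ℝᵐ be continuous functions, locally absolutely continuous on [0,∞), satisfying for almost every t ≥ 0 both ẋ(t) = Ax(t) + Bu(t−r−εd(t)) and u̇(t) = k e^{Ar}(Ax(t) + Bu(t−r−εd(t)) − Bu(t−r)) + kA ∫_{−r}^{0} e^{−As} B u(t+s) ds + k B u(t). If the initial compatibility condition u(0) = k e^{Ar} x(0) + k ∫_{−r}^{0} e^{−As} B u(s) ds holds, then u(t) = k e^{Ar} x(t) + k ∫_{−r}^{0} e^{−As} B u(t+s) ds for all t ≥ 0; that is, the set S := {(x,u) : u(0) = k e^{Ar} x + k ∫_{−r}^{0} e^{−As} B u(s) ds} is positively invariant. -/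

import Mathlib

/-!
The predictor term `P t = ∫_{-r}^0 e^{-A w} B u(t + w) dw` equals
`e^{A t} ∫_{t-r}^t e^{-A σ} B u(σ) dσ`, so it is differentiable with
`P' = A P + B u(t) - e^{A r} B u(t - r)`. Hence the feedback `k e^{A r} x(t) + k P(t)` has
derivative `k e^{A r} ẋ + k P'`, which is exactly the right-hand side of the equation for `u̇`.
Both sides of the claimed identity thus have the same integrand, and they agree at `t = 0`.
-/

open MeasureTheory

/-- Matrix-vector multiplication between Euclidean spaces. -/
noncomputable def mv {n m : ℕ} (A : Matrix (Fin n) (Fin m) ℝ)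
    (x : EuclideanSpace ℝ (Fin m)) : EuclideanSpace ℝ (Fin n) :=
  Matrix.toEuclideanLin A x

/-- `mexp A t = exp (t A)`, the matrix exponential. -/
noncomputable def mexp {n : ℕ} (A : Matrix (Fin n) (Fin n) ℝ) (t : ℝ) :
    Matrix (Fin n) (Fin n) ℝ :=
  NormedSpace.exp (t • A)

open NormedSpace Set

-- Mathlib's lemmas on `exp` need a `ℚ`-algebra structure, which it does not put on `E →L[ℝ] E`.
noncomputable local instance {E : Type*} [NormedAddCommGroup E] [NormedSpace ℝ E] :
    NormedAlgebra ℚ (E →L[ℝ] E) :=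
  .restrictScalars ℚ ℝ _

theorem Continuous.intervalIntegrable_comp_of_mapsTo {E : Type*} [NormedAddCommGroup E]
    {g : ℝ → E} (hg : Continuous g) {τ : ℝ → ℝ} (hτ : Measurable τ) {K : Set ℝ}
    (hK : IsCompact K) {a b : ℝ} (hτK : MapsTo τ (uIoc a b) K) :
    IntervalIntegrable (g ∘ τ) volume a b := by
  obtain ⟨C, hC⟩ := hK.exists_bound_of_continuousOn hg.continuousOn
  refine (intervalIntegrable_const (c := C)).mono_fun'
    (hg.comp_aestronglyMeasurable hτ.aestronglyMeasurable) ?_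
  filter_upwards [ae_restrict_mem measurableSet_uIoc] with s hs
  exact hC _ (hτK hs)

theorem ContinuousOn.continuous_comp_max {E : Type*} [TopologicalSpace E] {g : ℝ → E} {c : ℝ}
    (hg : ContinuousOn g (Ici c)) : Continuous fun s => g (max s c) :=
  hg.comp_continuous (by fun_prop) fun s => mem_Ici.2 (le_max_right s c)

theorem ContinuousOn.intervalIntegrable_comp_of_mapsTo {E : Type*} [NormedAddCommGroup E]
    {g : ℝ → E} {c q : ℝ} (hg : ContinuousOn g (Ici c)) {τ : ℝ → ℝ} (hτ : Measurable τ)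
    {a b : ℝ} (hτK : MapsTo τ (uIoc a b) (Icc c q)) : IntervalIntegrable (g ∘ τ) volume a b := by
  refine (intervalIntegrable_congr fun s hs => ?_).1
    (hg.continuous_comp_max.intervalIntegrable_comp_of_mapsTo hτ isCompact_Icc hτK)
  simp only [Function.comp_apply, max_eq_left (hτK hs).1]

section Predictor

variable {E F : Type*} [NormedAddCommGroup E] [NormedSpace ℝ E] [NormedAddCommGroup F]
  [NormedSpace ℝ F]

theorem exp_smul_mul_exp_smul [CompleteSpace E] (a : E →L[ℝ] E) (p q : ℝ) :
    exp (p • a) * exp (q • a) = exp ((p + q) • a) := by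
  rw [add_smul, exp_add_of_commute ((Commute.refl a).smul_left p |>.smul_right q)]

theorem exp_smul_apply_exp_smul [CompleteSpace E] (a : E →L[ℝ] E) (p q : ℝ) (v : E) :
    exp (p • a) (exp (q • a) v) = exp ((p + q) • a) v := by
  rw [← exp_smul_mul_exp_smul]; rfl

noncomputable def predictorIntegral (a : E →L[ℝ] E) (g : ℝ → E) (r t : ℝ) : E :=
  ∫ w in (-r)..0, exp ((-w) • a) (g (t + w))

theorem predictorIntegral_eq_exp_smul_integral [CompleteSpace E] (a : E →L[ℝ] E) {g : ℝ → E}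
    (hg : Continuous g) (r t : ℝ) :
    predictorIntegral a g r t = exp (t • a) (∫ σ in (t - r)..t, exp ((-σ) • a) (g σ)) := by
  have hint : Continuous fun σ => exp ((-σ) • a) (g σ) := by fun_prop
  have hshift := intervalIntegral.integral_comp_add_left (a := -r) (b := 0)
    (fun σ => exp (t • a) (exp ((-σ) • a) (g σ))) t
  rw [add_zero, ← sub_eq_add_neg] at hshift
  rw [← (exp (t • a)).intervalIntegral_comp_comm (hint.intervalIntegrable _ _), ← hshift]
  refine intervalIntegral.integral_congr fun w _ => ?_
  simp only [exp_smul_apply_exp_smul, neg_add, add_neg_cancel_left]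

theorem predictorIntegral_congr (a : E →L[ℝ] E) {g g' : ℝ → E} {r t : ℝ} (hr : 0 ≤ r)
    (h : EqOn g g' (Icc (t - r) t)) : predictorIntegral a g r t = predictorIntegral a g' r t := by
  refine intervalIntegral.integral_congr fun w hw => ?_
  rw [uIcc_of_le (neg_nonpos.2 hr)] at hw
  rw [h (show t + w ∈ Icc (t - r) t from ⟨by linarith [hw.1], by linarith [hw.2]⟩)]

theorem hasDerivAt_predictorIntegral [CompleteSpace E] (a : E →L[ℝ] E) {g : ℝ → E}
    (hg : Continuous g) (r t : ℝ) :
    HasDerivAt (predictorIntegral a g r)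
      (a (predictorIntegral a g r t) + g t - exp (r • a) (g (t - r))) t := by
  have hint : Continuous fun σ => exp ((-σ) • a) (g σ) := by fun_prop
  have hprim (s : ℝ) : ∫ σ in (s - r)..s, exp ((-σ) • a) (g σ) =
      (∫ σ in (0 : ℝ)..s, exp ((-σ) • a) (g σ)) - ∫ σ in (0 : ℝ)..(s - r), exp ((-σ) • a) (g σ) :=
    (intervalIntegral.integral_interval_sub_left (hint.intervalIntegrable _ _)
      (hint.intervalIntegrable _ _)).symm
  have hfun : predictorIntegral a g r = fun s => exp (s • a)
      ((∫ σ in (0 : ℝ)..s, exp ((-σ) • a) (g σ)) -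
        ∫ σ in (0 : ℝ)..(s - r), exp ((-σ) • a) (g σ)) := by
    funext s; rw [predictorIntegral_eq_exp_smul_integral a hg, hprim]
  have hderiv := (hasDerivAt_exp_smul_const' (𝕂 := ℝ) a t).clm_apply
    ((hint.integral_hasStrictDerivAt 0 t).hasDerivAt.sub
      ((hint.integral_hasStrictDerivAt 0 (t - r)).hasDerivAt.comp_sub_const t r))
  convert hderiv using 1
  · exact hfun
  simp only [hfun, Pi.sub_apply, mul_apply_eq_comp, map_sub,
    exp_smul_apply_exp_smul, add_neg_cancel, zero_smul, exp_zero, one_apply_eq_self,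
    neg_sub, add_sub_cancel]
  abel

theorem eq_predictorFeedback_of_integral_eq [CompleteSpace E] [CompleteSpace F] (a : E →L[ℝ] E)
    (K : E →L[ℝ] F) {g : ℝ → E} (hg : Continuous g) (r : ℝ) {x f : ℝ → E} {u : ℝ → F} {t : ℝ}
    (hf : IntervalIntegrable f volume 0 t) (hx : x t = x 0 + ∫ s in (0 : ℝ)..t, f s)
    (hu : u t = u 0 + ∫ s in (0 : ℝ)..t, (K (exp (r • a) (f s - g (s - r))) +
      K (a (predictorIntegral a g r s)) + K (g s)))
    (h0 : u 0 = K (exp (r • a) (x 0)) + K (predictorIntegral a g r 0)) :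
    u t = K (exp (r • a) (x t)) + K (predictorIntegral a g r t) := by
  set P := predictorIntegral a g r
  set P' := fun s => a (P s) + g s - exp (r • a) (g (s - r))
  have hP (s : ℝ) : HasDerivAt P (P' s) s := hasDerivAt_predictorIntegral a hg r s
  have hP' : Continuous P' := by
    have : Continuous P := continuous_iff_continuousAt.2 fun s => (hP s).continuousAt
    fun_prop
  have hPt : P t - P 0 = ∫ s in (0 : ℝ)..t, P' s :=
    (intervalIntegral.integral_eq_sub_of_hasDerivAt (fun s _ => hP s)
      (hP'.intervalIntegrable _ _)).symm
  have hsplit : (∫ s in (0 : ℝ)..t, (K (exp (r • a) (f s - g (s - r))) + K (a (P s)) + K (g s))) =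
      ∫ s in (0 : ℝ)..t, ((K.comp (exp (r • a))) (f s) + K (P' s)) := by
    refine intervalIntegral.integral_congr fun s _ => ?_
    simp only [P', ContinuousLinearMap.comp_apply, map_sub, map_add]
    abel
  have hKf : IntervalIntegrable (fun s => (K.comp (exp (r • a))) (f s)) volume 0 t :=
    ⟨(K.comp _).integrable_comp hf.1, (K.comp _).integrable_comp hf.2⟩
  have hKP' : IntervalIntegrable (fun s => K (P' s)) volume 0 t := by
    apply Continuous.intervalIntegrable; fun_prop
  rw [hu, hsplit, intervalIntegral.integral_add hKf hKP', (K.comp _).intervalIntegral_comp_comm hf,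
    K.intervalIntegral_comp_comm (hP'.intervalIntegrable _ _), ← hPt,
    ← sub_eq_of_eq_add' hx, h0]
  simp only [ContinuousLinearMap.comp_apply, map_sub]
  abel

theorem eq_predictorFeedback_of_closedLoop [CompleteSpace E] [CompleteSpace F] (a : E →L[ℝ] E)
    (b : F →L[ℝ] E) (K : E →L[ℝ] F) {r c : ℝ} (hr : 0 ≤ r) (hcr : c ≤ -r) {τ : ℝ → ℝ}
    (hτ : Measurable τ) (hτc : ∀ s, 0 ≤ s → τ s ∈ Icc c s) {x : ℝ → E} {u : ℝ → F}
    (hxc : ContinuousOn x (Ici 0)) (huc : ContinuousOn u (Ici c))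
    (hplant : ∀ t, 0 ≤ t → x t = x 0 + ∫ s in (0 : ℝ)..t, (a (x s) + b (u (τ s))))
    (hufb : ∀ t, 0 ≤ t → u t = u 0 + ∫ s in (0 : ℝ)..t,
      (K (exp (r • a) (a (x s) + b (u (τ s)) - b (u (s - r)))) +
        K (a (predictorIntegral a (fun σ => b (u σ)) r s)) + K (b (u s))))
    (hcompat : u 0 = K (exp (r • a) (x 0)) + K (predictorIntegral a (fun σ => b (u σ)) r 0)) :
    ∀ t, 0 ≤ t →
      u t = K (exp (r • a) (x t)) + K (predictorIntegral a (fun σ => b (u σ)) r t) := by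
  intro t ht
  set v := fun s => u (max s c)
  have hv : Continuous v := huc.continuous_comp_max
  have hvu {s : ℝ} (hs : c ≤ s) : b (v s) = b (u s) := by simp only [v, max_eq_left hs]
  have hP {s : ℝ} (hs : 0 ≤ s) : predictorIntegral a (fun σ => b (u σ)) r s =
      predictorIntegral a (b ∘ v) r s :=
    predictorIntegral_congr a hr fun σ hσ => (hvu (by linarith [hσ.1])).symm
  have hf : IntervalIntegrable (fun s => a (x s) + b (u (τ s))) volume 0 t := by
    have hsub : uIcc 0 t ⊆ Ici 0 := by rw [uIcc_of_le ht]; exact Icc_subset_Ici_self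
    refine (a.continuous.comp_continuousOn (hxc.mono hsub)).intervalIntegrable.add
      ((b.continuous.comp_continuousOn huc).intervalIntegrable_comp_of_mapsTo (q := t) hτ
        fun s hs => ?_)
    rw [uIoc_of_le ht] at hs
    exact ⟨(hτc s hs.1.le).1, (hτc s hs.1.le).2.trans hs.2⟩
  rw [hP ht]
  refine eq_predictorFeedback_of_integral_eq a K (b.continuous.comp hv) r hf (hplant t ht) ?_ ?_
  · rw [hufb t ht]
    congr 1
    refine intervalIntegral.integral_congr fun s hs => ?_
    rw [uIcc_of_le ht] at hs
    simp only [Function.comp_apply, hvu (by linarith [hs.1] : c ≤ s - r),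
      hvu (by linarith [hs.1] : c ≤ s), hP hs.1]
  · rw [hcompat, hP le_rfl]

end Predictor

theorem sub_sub_mul_mem_Icc {r ε δ s : ℝ} (hε : 0 ≤ ε) (hεr : ε ≤ r) (hδ : δ ∈ Icc (-1 : ℝ) 1)
    (hs : 0 ≤ s) : s - r - ε * δ ∈ Icc (-(r + ε)) s := by
  have := hδ.1; have := hδ.2
  constructor <;> nlinarith

theorem mv_eq_toContinuousLinearMap {n m : ℕ} (A : Matrix (Fin n) (Fin m) ℝ)
    (v : EuclideanSpace ℝ (Fin m)) :
    mv A v = LinearMap.toContinuousLinearMap (Matrix.toEuclideanLin A) v :=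
  rfl

open scoped Matrix.Norms.L2Operator in
theorem toContinuousLinearMap_toEuclideanLin_mexp {n : ℕ} (A : Matrix (Fin n) (Fin n) ℝ) (t : ℝ) :
    LinearMap.toContinuousLinearMap (Matrix.toEuclideanLin (mexp A t)) =
      exp (t • LinearMap.toContinuousLinearMap (Matrix.toEuclideanLin A)) := by
  let : NormedAlgebra ℚ (Matrix (Fin n) (Fin n) ℝ) := .restrictScalars ℚ ℝ _
  set φ := Matrix.toEuclideanCLM (𝕜 := ℝ) (n := Fin n)
  have hφ : Continuous φ :=
    LinearMap.continuous_of_finiteDimensional φ.toAlgEquiv.toLinearEquiv.toLinearMap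
  change φ (mexp A t) = exp (t • φ A)
  rw [mexp, map_exp _ hφ, map_smul]

theorem stmt_18 (n m : ℕ) (A : Matrix (Fin n) (Fin n) ℝ)
    (B : Matrix (Fin n) (Fin m) ℝ) (k : Matrix (Fin m) (Fin n) ℝ)
    (r ε : ℝ) (hε : 0 < ε) (hεr : ε ≤ r)
    (d : ℝ → ℝ) (hd : Measurable d) (hd1 : ∀ t, 0 ≤ t → d t ∈ Set.Icc (-1 : ℝ) 1)
    (x : ℝ → EuclideanSpace ℝ (Fin n)) (u : ℝ → EuclideanSpace ℝ (Fin m))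
    (hxc : ContinuousOn x (Set.Ici 0))
    (huc : ContinuousOn u (Set.Ici (-(r + ε))))
    -- the plant dynamics
    (hplant : ∀ t : ℝ, 0 ≤ t →
      x t = x 0 + ∫ s in (0 : ℝ)..t, (mv A (x s) + mv B (u (s - r - ε * d s))))
    -- the differentiated predictor feedback dynamics
    (hufb : ∀ t : ℝ, 0 ≤ t →
      u t = u 0 + ∫ s in (0 : ℝ)..t,
        (mv k (mv (mexp A r)
            (mv A (x s) + mv B (u (s - r - ε * d s)) - mv B (u (s - r)))) +
          mv k (mv A (∫ w in (-r : ℝ)..0, mv (mexp A (-w)) (mv B (u (s + w))))) +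
          mv k (mv B (u s))))
    -- initial compatibility condition
    (hcompat : u 0 = mv k (mv (mexp A r) (x 0)) +
      mv k (∫ s in (-r : ℝ)..0, mv (mexp A (-s)) (mv B (u s)))) :
    -- positive invariance of the set `S`
    ∀ t : ℝ, 0 ≤ t →
      u t = mv k (mv (mexp A r) (x t)) +
        mv k (∫ s in (-r : ℝ)..0, mv (mexp A (-s)) (mv B (u (t + s)))) := by
  simp only [mv_eq_toContinuousLinearMap, toContinuousLinearMap_toEuclideanLin_mexp]
    at hplant hufb hcompat ⊢
  have hr : 0 ≤ r := hε.le.trans hεr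
  refine eq_predictorFeedback_of_closedLoop _ _ _ hr (by linarith)
    ((measurable_id.sub_const r).sub (hd.const_mul ε))
    (fun s hs => sub_sub_mul_mem_Icc hε.le hεr (hd1 s hs) hs) hxc huc hplant hufb ?_
  rw [hcompat]
  simp only [predictorIntegral, zero_add]
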